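/- arXiv:2006.15703 — 3 statements merged into one kernel-verified Lean document; each statement's English description precedes it below -/
import Mathlib

section
/- Let φ be a proper partial (Δ+1)-edge-coloring and let C = (e₀,...,e_{ℓ−1}) be a φ-shiftable chain. Then: (i) the unique edge of C uncolored by φ is e₀; (ii) Shift(φ,C) is a proper partial coloring agreeing with φ on all edges outside {e₀,...,e_{ℓ−1}}; (iii) the unique edge of C uncolored by Shift(φ,C) is e_{ℓ−1}. -/
open SimpleGraph

variable {V : Type*} [DecidableEq V]

def EdgeAdj (e f : Sym2 V) : Prop := e ≠ f ∧ ∃ v, v ∈ e ∧ v ∈ f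

/-- The colors `{1,…,Δ+1}` are `Fin (Δ + 1)`; `none` means uncolored. -/
def IsProperPartial (G : SimpleGraph V) (Δ : ℕ)
    (φ : Sym2 V → Option (Fin (Δ + 1))) : Prop :=
  (∀ e, (φ e).isSome → e ∈ G.edgeSet) ∧
  ∀ e f, EdgeAdj e f → (φ e).isSome → φ e ≠ φ f

/-- The set `M(φ,x)` of colors missing at `x`. -/
def missingColors (G : SimpleGraph V) (Δ : ℕ)
    (φ : Sym2 V → Option (Fin (Δ + 1))) (x : V) : Set (Fin (Δ + 1)) :=
  {c | ∀ y, G.Adj x y → φ s(x, y) ≠ some c}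

def Shift {α : Type*} (φ : Sym2 V → Option α) (e₀ e₁ : Sym2 V) :
    Sym2 V → Option α :=
  fun e => if e = e₀ then φ e₁ else if e = e₁ then none else φ e

def ShiftablePair (G : SimpleGraph V) (Δ : ℕ) (φ : Sym2 V → Option (Fin (Δ + 1)))
    (e₀ e₁ : Sym2 V) : Prop :=
  EdgeAdj e₀ e₁ ∧ e₀ ∈ G.edgeSet ∧ φ e₀ = none ∧ (φ e₁).isSome ∧
    IsProperPartial G Δ (Shift φ e₀ e₁)

def ShiftChain {α : Type*} : List (Sym2 V) → (Sym2 V → Option α) → (Sym2 V → Option α)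
  | [], φ => φ
  | [_], φ => φ
  | e₀ :: e₁ :: rest, φ => ShiftChain (e₁ :: rest) (Shift φ e₀ e₁)

def ChainShiftable (G : SimpleGraph V) (Δ : ℕ) :
    List (Sym2 V) → (Sym2 V → Option (Fin (Δ + 1))) → Prop
  | [], _ => True
  | [e], φ => φ e = none ∧ e ∈ G.edgeSet
  | e₀ :: e₁ :: rest, φ =>
      ShiftablePair G Δ φ e₀ e₁ ∧ ChainShiftable G Δ (e₁ :: rest) (Shift φ e₀ e₁)

/-- The spanning subgraph `G(φ, αβ)` of edges colored `α` or `β`. -/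
def abSub (G : SimpleGraph V) (Δ : ℕ) (φ : Sym2 V → Option (Fin (Δ + 1)))
    (α β : Fin (Δ + 1)) : SimpleGraph V where
  Adj x y := G.Adj x y ∧ (φ s(x, y) = some α ∨ φ s(x, y) = some β)
  symm := by
    constructor
    intro x y h
    refine ⟨h.1.symm, ?_⟩
    rw [Sym2.eq_swap]
    exact h.2
  loopless := ⟨fun x h => G.irrefl h.1⟩

def ChainHappy (G : SimpleGraph V) (Δ : ℕ) (C : List (Sym2 V))
    (φ : Sym2 V → Option (Fin (Δ + 1))) : Prop :=
  ChainShiftable G Δ C φ ∧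
    ∃ x y : V, C.getLast? = some s(x, y) ∧
      (missingColors G Δ (ShiftChain C φ) x ∩ missingColors G Δ (ShiftChain C φ) y).Nonempty

section Shift

variable {α : Type*} (φ : Sym2 V → Option α) {e e₀ e₁ : Sym2 V}

lemma shift_apply_left : Shift φ e₀ e₁ e₀ = φ e₁ := if_pos rfl

lemma shift_apply_of_ne (h₀ : e ≠ e₀) (h₁ : e ≠ e₁) : Shift φ e₀ e₁ e = φ e := by
  simp [Shift, h₀, h₁]

lemma shiftChain_cons_cons (rest : List (Sym2 V)) :
    ShiftChain (e₀ :: e₁ :: rest) φ = ShiftChain (e₁ :: rest) (Shift φ e₀ e₁) := rfl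

lemma shiftChain_apply_of_not_mem {C : List (Sym2 V)} (he : e ∉ C) :
    ShiftChain C φ e = φ e := by
  induction C, φ using ShiftChain.induct with
  | case1 | case2 => rfl
  | case3 e₀ e₁ rest φ ih =>
    simp only [List.mem_cons, not_or] at he
    rw [shiftChain_cons_cons, ih (by simpa using he.2), shift_apply_of_ne φ he.1 he.2.1]

end Shift

namespace ChainShiftable

variable {G : SimpleGraph V} {Δ : ℕ} {φ : Sym2 V → Option (Fin (Δ + 1))} {C : List (Sym2 V)}

lemma head_eq_none (hC : ChainShiftable G Δ C φ) (hne : C ≠ []) : φ (C.head hne) = none := by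
  match C, hC with
  | [_], hC => exact hC.1
  | _ :: _ :: _, hC => exact hC.1.2.2.1

lemma eq_head_of_eq_none (hC : ChainShiftable G Δ C φ) (hne : C ≠ []) {e : Sym2 V}
    (he : e ∈ C) (hφe : φ e = none) : e = C.head hne := by
  induction C, φ using ShiftChain.induct with
  | case1 => simp at he
  | case2 => simpa using he
  | case3 e₀ e₁ rest φ ih =>
    obtain ⟨⟨-, -, -, h₁, -⟩, hC⟩ := hC
    rcases List.mem_cons.1 he with rfl | he
    · rfl
    show e = e₀
    by_contra h₀
    have h₁' : e ≠ e₁ := by rintro rfl; simp [hφe] at h₁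
    -- after the first shift only `e₁` is uncolored in the tail, and `e` is not `e₁`
    exact h₁' (ih hC (List.cons_ne_nil _ _) he (by rwa [shift_apply_of_ne φ h₀ h₁']))

lemma isProperPartial_shiftChain (hφ : IsProperPartial G Δ φ) (hC : ChainShiftable G Δ C φ) :
    IsProperPartial G Δ (ShiftChain C φ) := by
  induction C, φ using ShiftChain.induct with
  | case1 | case2 => exact hφ
  | case3 e₀ e₁ rest φ ih => exact ih hC.1.2.2.2.2 hC.2

lemma shiftChain_getLast_eq_none (hC : ChainShiftable G Δ C φ) (hne : C ≠ []) :
    ShiftChain C φ (C.getLast hne) = none := by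
  induction C, φ using ShiftChain.induct with
  | case1 => exact absurd rfl hne
  | case2 => exact hC.1
  | case3 e₀ e₁ rest φ ih =>
    rw [shiftChain_cons_cons, List.getLast_cons (List.cons_ne_nil _ _)]
    exact ih hC.2 _

lemma eq_getLast_of_shiftChain_eq_none (hC : ChainShiftable G Δ C φ) (hne : C ≠ []) {e : Sym2 V}
    (he : e ∈ C) (hφe : ShiftChain C φ e = none) : e = C.getLast hne := by
  induction C, φ using ShiftChain.induct with
  | case1 => simp at he
  | case2 => simpa using he
  | case3 e₀ e₁ rest φ ih =>
    obtain ⟨⟨-, -, -, h₁, -⟩, hC⟩ := hC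
    rw [List.getLast_cons (List.cons_ne_nil _ _)]
    rw [shiftChain_cons_cons] at hφe
    by_cases htail : e ∈ e₁ :: rest
    · exact ih hC _ htail hφe
    -- then `e = e₀`, which received the color of `e₁` and keeps it
    obtain rfl : e = e₀ := by simpa [htail] using he
    rw [shiftChain_apply_of_not_mem _ htail, shift_apply_left] at hφe
    simp [hφe] at h₁

end ChainShiftable

theorem shiftChain_facts_general (G : SimpleGraph V) (Δ : ℕ)
    (φ : Sym2 V → Option (Fin (Δ + 1))) (hφ : IsProperPartial G Δ φ)
    (C : List (Sym2 V)) (hne : C ≠ [])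
    (hC : ChainShiftable G Δ C φ) :
    (φ (C.head hne) = none ∧ ∀ e ∈ C, φ e = none → e = C.head hne) ∧
    (IsProperPartial G Δ (ShiftChain C φ) ∧ ∀ e ∉ C, ShiftChain C φ e = φ e) ∧
    (ShiftChain C φ (C.getLast hne) = none ∧
      ∀ e ∈ C, ShiftChain C φ e = none → e = C.getLast hne) :=
  ⟨⟨hC.head_eq_none hne, fun _ he => hC.eq_head_of_eq_none hne he⟩,
    ⟨hC.isProperPartial_shiftChain hφ, fun _ he => shiftChain_apply_of_not_mem φ he⟩,
    ⟨hC.shiftChain_getLast_eq_none hne, fun _ he => hC.eq_getLast_of_shiftChain_eq_none hne he⟩⟩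

/-- for a `φ`-shiftable chain `C`: (i) the unique `φ`-uncolored edge of `C`
is its first edge; (ii) `Shift(φ,C)` is proper and agrees with `φ` off `E(C)`;
(iii) the unique edge of `C` uncolored by `Shift(φ,C)` is its last edge. -/
theorem shiftChain_facts [Fintype V] (G : SimpleGraph V) (Δ : ℕ)
    (φ : Sym2 V → Option (Fin (Δ + 1))) (hφ : IsProperPartial G Δ φ)
    (C : List (Sym2 V)) (hne : C ≠ []) (hchain : C.Chain' EdgeAdj)
    (hC : ChainShiftable G Δ C φ) :
    (φ (C.head hne) = none ∧ ∀ e ∈ C, φ e = none → e = C.head hne) ∧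
    (IsProperPartial G Δ (ShiftChain C φ) ∧ ∀ e ∉ C, ShiftChain C φ e = φ e) ∧
    (ShiftChain C φ (C.getLast hne) = none ∧
      ∀ e ∈ C, ShiftChain C φ e = none → e = C.getLast hne) :=
  shiftChain_facts_general G Δ φ hφ C hne hC
end

section
/- Let φ be a proper partial (Δ+1)-edge-coloring, F a φ-shiftable fan with pivot x and last vertex y that is not φ-happy, and ψ := Shift(φ,F). If F is (φ,αβ)-hopeful (both x and y have degree < 2 in the αβ-colored subgraph of φ), then the edge xy is (ψ,αβ)-hopeful; if moreover F is (φ,αβ)-successful (x and y are in different components of the αβ-colored subgraph of ψ), then xy is (ψ,αβ)-successful. -/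
open SimpleGraph

variable {V : Type*} [DecidableEq V]

/-- The fan with pivot `x` through the vertices of `ys`. -/
def fanList (x : V) (ys : List V) : List (Sym2 V) := ys.map (fun y => s(x, y))

/-- An uncolored edge `xy` is `(φ,αβ)`-hopeful: both endpoints have degree `< 2` in the
`αβ`-colored subgraph. -/
def EdgeHopeful (G : SimpleGraph V) (Δ : ℕ) (φ : Sym2 V → Option (Fin (Δ + 1)))
    (α β : Fin (Δ + 1)) (x y : V) : Prop :=
  φ s(x, y) = none ∧ ((abSub G Δ φ α β).neighborSet x).ncard < 2 ∧
    ((abSub G Δ φ α β).neighborSet y).ncard < 2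

/-- An uncolored edge `xy` is `(φ,αβ)`-successful: hopeful, and `x`, `y` lie in different
components of the `αβ`-colored subgraph. -/
def EdgeSuccessful (G : SimpleGraph V) (Δ : ℕ) (φ : Sym2 V → Option (Fin (Δ + 1)))
    (α β : Fin (Δ + 1)) (x y : V) : Prop :=
  EdgeHopeful G Δ φ α β x y ∧ ¬ (abSub G Δ φ α β).Reachable x y

/-! Shifting along a fan with pivot `x` only moves colors between edges at `x` and finally
uncolors `xy`, so no color missing at `x`, or at the last vertex `y` (which occurs once in the
fan), becomes present. In a proper coloring the `αβ`-degree of a vertex is the number of colors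
among `α`, `β` present at it, hence it cannot grow under the shift. -/

theorem List.Nodup.getLast_notMem_dropLast {α : Type*} {l : List α} (hl : l.Nodup)
    (hne : l ≠ []) : l.getLast hne ∉ l.dropLast := by
  rw [← List.dropLast_concat_getLast hne, List.nodup_append] at hl
  exact fun h => hl.2.2 _ h _ (List.mem_singleton_self _) rfl

theorem Shift_apply_eq_none_or_eq {α : Type*} (φ : Sym2 V → Option α) {e e₀ : Sym2 V}
    (e₁ : Sym2 V) (h₀ : e ≠ e₀) : Shift φ e₀ e₁ e = none ∨ Shift φ e₀ e₁ e = φ e := by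
  rw [Shift, if_neg h₀]
  split_ifs <;> simp

section Missing

variable (G : SimpleGraph V) (Δ : ℕ)

theorem missingColors_subset_shift (φ : Sym2 V → Option (Fin (Δ + 1))) {v : V} {e₀ e₁ : Sym2 V}
    (h : v ∈ e₀ → ∀ c ∈ missingColors G Δ φ v, φ e₁ ≠ some c) :
    missingColors G Δ φ v ⊆ missingColors G Δ (Shift φ e₀ e₁) v := by
  intro c hc z hz
  by_cases h₀ : s(v, z) = e₀
  · simpa [Shift, h₀] using h (h₀ ▸ Sym2.mem_mk_left v z) c hc
  · rcases Shift_apply_eq_none_or_eq φ e₁ h₀ with h' | h' <;> rw [h']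
    · simp
    · exact hc z hz

theorem missingColors_pivot_subset_shiftChain_fan (x : V) :
    ∀ (ys : List V) (φ : Sym2 V → Option (Fin (Δ + 1))), (∀ v ∈ ys, G.Adj x v) →
      missingColors G Δ φ x ⊆ missingColors G Δ (ShiftChain (fanList x ys) φ) x
  | [], _, _ | [_], _, _ => subset_rfl
  | a :: b :: rest, φ, hadj =>
      (missingColors_subset_shift G Δ φ fun _ c hc => hc b (hadj b (by simp))).trans
        (missingColors_pivot_subset_shiftChain_fan x (b :: rest) _
          fun v hv => hadj v (List.mem_cons_of_mem a hv))

theorem missingColors_subset_shiftChain_fan {x y : V} (hyx : y ≠ x) :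
    ∀ (ys : List V) (φ : Sym2 V → Option (Fin (Δ + 1))), y ∉ ys.dropLast →
      missingColors G Δ φ y ⊆ missingColors G Δ (ShiftChain (fanList x ys) φ) y
  | [], _, _ | [_], _, _ => subset_rfl
  | a :: b :: rest, φ, hy => by
      have hya : y ∉ s(x, a) := by
        simp only [List.dropLast_cons_cons, List.mem_cons, not_or] at hy
        simp [hyx, hy.1]
      refine (missingColors_subset_shift G Δ φ (e₁ := s(x, b)) fun h => absurd h hya).trans
        (missingColors_subset_shiftChain_fan hyx (b :: rest) _ fun h => hy ?_)
      simp [h]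

end Missing

theorem IsProperPartial.shiftChain {G : SimpleGraph V} {Δ : ℕ} :
    ∀ {C : List (Sym2 V)} {φ : Sym2 V → Option (Fin (Δ + 1))},
      IsProperPartial G Δ φ → ChainShiftable G Δ C φ → IsProperPartial G Δ (ShiftChain C φ)
  | [], _, hφ, _ | [_], _, hφ, _ => hφ
  | _ :: e₁ :: rest, _, _, hC => IsProperPartial.shiftChain (C := e₁ :: rest) hC.1.2.2.2.2 hC.2

theorem shiftChain_getLast_eq_none {G : SimpleGraph V} {Δ : ℕ} :
    ∀ {C : List (Sym2 V)} {φ : Sym2 V → Option (Fin (Δ + 1))} (hC : C ≠ []),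
      ChainShiftable G Δ C φ → ShiftChain C φ (C.getLast hC) = none
  | [_], _, _, hC => hC.1
  | _ :: e₁ :: rest, _, _, hC =>
      shiftChain_getLast_eq_none (C := e₁ :: rest) (List.cons_ne_nil _ _) hC.2

namespace IsProperPartial

variable {G : SimpleGraph V} {Δ : ℕ} {φ ψ : Sym2 V → Option (Fin (Δ + 1))}

theorem ncard_neighborSet_abSub (hφ : IsProperPartial G Δ φ) (α β : Fin (Δ + 1)) (v : V) :
    ((abSub G Δ φ α β).neighborSet v).ncard = ({α, β} \ missingColors G Δ φ v).ncard := by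
  have hinj : Set.InjOn (fun z => φ s(v, z)) ((abSub G Δ φ α β).neighborSet v) := by
    intro z₁ hz₁ z₂ _ h
    by_contra hne
    refine hφ.2 s(v, z₁) s(v, z₂) ⟨?_, v, Sym2.mem_mk_left v z₁, Sym2.mem_mk_left v z₂⟩ ?_ h
    · exact fun he => hne (Sym2.congr_right.mp he)
    · rcases hz₁.2 with h' | h' <;> simp [h']
  have himage : (fun z => φ s(v, z)) '' (abSub G Δ φ α β).neighborSet v =
      some '' ({α, β} \ missingColors G Δ φ v) := by
    ext o
    simp only [Set.mem_image, mem_neighborSet, abSub, Set.mem_sdiff, missingColors,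
      Set.mem_insert_iff, Set.mem_singleton_iff, Set.mem_ofPred_eq, not_forall, not_not]
    constructor
    · rintro ⟨z, ⟨hz, hc | hc⟩, rfl⟩
      exacts [⟨α, ⟨Or.inl rfl, z, hz, hc⟩, hc.symm⟩, ⟨β, ⟨Or.inr rfl, z, hz, hc⟩, hc.symm⟩]
    · rintro ⟨c, ⟨rfl | rfl, z, hz, hc⟩, rfl⟩
      exacts [⟨z, ⟨hz, Or.inl hc⟩, hc⟩, ⟨z, ⟨hz, Or.inr hc⟩, hc⟩]
  rw [← hinj.ncard_image, himage, Set.ncard_image_of_injective _ (Option.some_injective _)]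

theorem ncard_neighborSet_abSub_le (hφ : IsProperPartial G Δ φ) (hψ : IsProperPartial G Δ ψ)
    (α β : Fin (Δ + 1)) {v : V} (h : missingColors G Δ φ v ⊆ missingColors G Δ ψ v) :
    ((abSub G Δ ψ α β).neighborSet v).ncard ≤ ((abSub G Δ φ α β).neighborSet v).ncard := by
  rw [hφ.ncard_neighborSet_abSub, hψ.ncard_neighborSet_abSub]
  exact Set.ncard_le_ncard (Set.sdiff_subset_sdiff_right h)

end IsProperPartial

theorem fan_hopeful_successful_general (G : SimpleGraph V) (Δ : ℕ)
    (φ : Sym2 V → Option (Fin (Δ + 1))) (hφ : IsProperPartial G Δ φ)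
    (α β : Fin (Δ + 1)) (x : V) (ys : List V) (hne : ys ≠ [])
    (hnd : ys.Nodup) (hadj : ∀ v ∈ ys, G.Adj x v)
    (hshift : ChainShiftable G Δ (fanList x ys) φ) :
    ((((abSub G Δ φ α β).neighborSet x).ncard < 2 ∧
        ((abSub G Δ φ α β).neighborSet (ys.getLast hne)).ncard < 2) →
      EdgeHopeful G Δ (ShiftChain (fanList x ys) φ) α β x (ys.getLast hne)) ∧
    (((((abSub G Δ φ α β).neighborSet x).ncard < 2 ∧
        ((abSub G Δ φ α β).neighborSet (ys.getLast hne)).ncard < 2) ∧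
      ¬ (abSub G Δ (ShiftChain (fanList x ys) φ) α β).Reachable x (ys.getLast hne)) →
      EdgeSuccessful G Δ (ShiftChain (fanList x ys) φ) α β x (ys.getLast hne)) := by
  have hy : G.Adj x (ys.getLast hne) := hadj _ (List.getLast_mem hne)
  have hψ := hφ.shiftChain hshift
  have hxy : ShiftChain (fanList x ys) φ s(x, ys.getLast hne) = none := by
    simpa [fanList] using shiftChain_getLast_eq_none (by simpa [fanList]) hshift
  have hdeg_x := hφ.ncard_neighborSet_abSub_le hψ α β
    (missingColors_pivot_subset_shiftChain_fan G Δ x ys φ hadj)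
  have hdeg_y := hφ.ncard_neighborSet_abSub_le hψ α β
    (missingColors_subset_shiftChain_fan G Δ hy.ne' ys φ (hnd.getLast_notMem_dropLast hne))
  have hhopeful : (((abSub G Δ φ α β).neighborSet x).ncard < 2 ∧
      ((abSub G Δ φ α β).neighborSet (ys.getLast hne)).ncard < 2) →
      EdgeHopeful G Δ (ShiftChain (fanList x ys) φ) α β x (ys.getLast hne) :=
    fun ⟨hx, hy⟩ => ⟨hxy, hdeg_x.trans_lt hx, hdeg_y.trans_lt hy⟩
  exact ⟨hhopeful, fun ⟨h, hr⟩ => ⟨hhopeful h, hr⟩⟩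

/-- for a `φ`-shiftable fan `F` with pivot `x` and last vertex `y`, with the
edge `xy` not `φ`-happy and `ψ := Shift(φ,F)`: if `F` is `(φ,αβ)`-hopeful then `xy` is
`(ψ,αβ)`-hopeful, and if moreover `F` is `(φ,αβ)`-successful then `xy` is `(ψ,αβ)`-successful. -/
theorem fan_hopeful_successful [Fintype V] (G : SimpleGraph V) (Δ : ℕ)
    (φ : Sym2 V → Option (Fin (Δ + 1))) (hφ : IsProperPartial G Δ φ)
    (α β : Fin (Δ + 1)) (hab : α ≠ β) (x : V) (ys : List V) (hne : ys ≠ [])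
    (hnd : ys.Nodup) (hadj : ∀ v ∈ ys, G.Adj x v)
    (hshift : ChainShiftable G Δ (fanList x ys) φ)
    (hnothappy : missingColors G Δ φ x ∩ missingColors G Δ φ (ys.getLast hne) = ∅) :
    ((((abSub G Δ φ α β).neighborSet x).ncard < 2 ∧
        ((abSub G Δ φ α β).neighborSet (ys.getLast hne)).ncard < 2) →
      EdgeHopeful G Δ (ShiftChain (fanList x ys) φ) α β x (ys.getLast hne)) ∧
    (((((abSub G Δ φ α β).neighborSet x).ncard < 2 ∧
        ((abSub G Δ φ α β).neighborSet (ys.getLast hne)).ncard < 2) ∧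
      ¬ (abSub G Δ (ShiftChain (fanList x ys) φ) α β).Reachable x (ys.getLast hne)) →
      EdgeSuccessful G Δ (ShiftChain (fanList x ys) φ) α β x (ys.getLast hne)) :=
  fan_hopeful_successful_general G Δ φ hφ α β x ys hne hnd hadj hshift
end

section
/- For every proper partial (Δ+1)-edge-coloring φ of G and every vertex y, the set R⁻(y,φ) has size at most (Δ+1)³. -/
open SimpleGraph

variable {V : Type*} [DecidableEq V]

/-- `R⁺(x,φ,αβ)`: vertices `y` with `y = x`, or `y` adjacent to `x`, or `y` in the same
`αβ`-component as some neighbor `z` of `x` with `deg(z,φ,αβ) < 2`. -/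
def Rout (G : SimpleGraph V) (Δ : ℕ) (φ : Sym2 V → Option (Fin (Δ + 1)))
    (α β : Fin (Δ + 1)) (x : V) : Set V :=
  {y | y = x ∨ G.Adj x y ∨ ∃ z, G.Adj x z ∧
    ((abSub G Δ φ α β).neighborSet z).ncard < 2 ∧ (abSub G Δ φ α β).Reachable z y}

/-- `R⁻(y,φ)`: the union over all pairs of distinct colors `α ≠ β` of
`{x : y ∈ R⁺(x,φ,αβ)}`. -/
def Rin (G : SimpleGraph V) (Δ : ℕ) (φ : Sym2 V → Option (Fin (Δ + 1))) (y : V) :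
    Set V :=
  {x | ∃ α β : Fin (Δ + 1), α ≠ β ∧ y ∈ Rout G Δ φ α β x}

/-!
If `x ∈ R⁻(y, φ)`, then either `x` lies in the closed neighbourhood of `y` (at most `Δ + 1`
vertices), or for some pair `{α, β}` of distinct colours `x` is adjacent to an end of the
`αβ`-chain through `y`, i.e. to a vertex of degree `< 2` in the component of `y` in `G(φ, αβ)`.
That graph has maximum degree 2, so each of its components has at most two ends. With
`Δ(Δ + 1)/2` pairs, two ends per pair and at most `Δ` neighbours per end,
`|R⁻(y, φ)| ≤ (Δ + 1) + Δ²(Δ + 1) ≤ (Δ + 1)³`.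
-/

open Finset

lemma Set.ncard_biUnion_le_ncard_mul {ι α : Type*} {t : Set ι} (ht : t.Finite) {s : ι → Set α}
    {k : ℕ} (h : ∀ i ∈ t, (s i).ncard ≤ k) : (⋃ i ∈ t, s i).ncard ≤ t.ncard * k := by
  lift t to Finset ι using ht
  calc (⋃ i ∈ (t : Set ι), s i).ncard ≤ ∑ i ∈ t, (s i).ncard := by
        simpa using t.set_ncard_biUnion_le s
    _ ≤ #t * k := by simpa using Finset.sum_le_card_nsmul t _ k h
    _ = (t : Set ι).ncard * k := by rw [Set.ncard_coe_finset]

namespace SimpleGraph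

variable {V : Type*} {G : SimpleGraph V}

lemma ncard_neighborSet_eq_degree (v : V) [Fintype (G.neighborSet v)] :
    (G.neighborSet v).ncard = G.degree v := by
  rw [Set.ncard_eq_toFinset_card', Set.toFinset_card, card_neighborSet_eq_degree]

/-- By the handshake lemma and `|E| ≥ |V| - 1`, `∑ (2 - deg v) ≤ 2` in a finite connected graph. -/
theorem Connected.ncard_setOf_ncard_neighborSet_lt_two_le [Finite V] (hG : G.Connected)
    (hdeg : ∀ v, (G.neighborSet v).ncard ≤ 2) :
    {v | (G.neighborSet v).ncard < 2}.ncard ≤ 2 := by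
  classical
  cases nonempty_fintype V
  simp only [ncard_neighborSet_eq_degree] at hdeg ⊢
  have hedges : Fintype.card V ≤ #G.edgeFinset + 1 := by
    have := hG.card_vert_le_card_edgeSet_add_one
    rwa [Nat.card_eq_fintype_card, Nat.card_eq_fintype_card, ← edgeFinset_card] at this
  have hsum : ∑ v, G.degree v + #{v | G.degree v < 2} ≤ 2 * Fintype.card V := by
    rw [Finset.card_filter, ← Finset.sum_add_distrib, mul_comm, ← smul_eq_mul, ← Finset.card_univ]
    refine Finset.sum_le_card_nsmul _ _ _ fun v _ => ?_
    have := hdeg v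
    split_ifs <;> omega
  rw [Set.ncard_eq_toFinset_card', Set.toFinset_ofPred]
  have := G.sum_degrees_eq_twice_card_edges
  omega

lemma ConnectedComponent.ncard_neighborSet_toSimpleGraph (C : G.ConnectedComponent) (v : C) :
    (C.toSimpleGraph.neighborSet v).ncard = (G.neighborSet v).ncard := by
  refine Set.ncard_preimage_of_injective_subset_range (s := G.neighborSet v)
    Subtype.val_injective fun w hw => ?_
  exact ⟨⟨w, C.mem_supp_of_adj_mem_supp v.2 hw⟩, rfl⟩

theorem ncard_setOf_reachable_ncard_neighborSet_lt_two_le [Finite V]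
    (hdeg : ∀ v, (G.neighborSet v).ncard ≤ 2) (y : V) :
    {z | G.Reachable z y ∧ (G.neighborSet z).ncard < 2}.ncard ≤ 2 := by
  set C := G.connectedComponentMk y
  have hends : {z | G.Reachable z y ∧ (G.neighborSet z).ncard < 2} =
      Subtype.val '' {v : C | (C.toSimpleGraph.neighborSet v).ncard < 2} := by
    ext z
    have hmem : z ∈ C ↔ G.Reachable z y := (C.mem_supp_iff z).trans ConnectedComponent.eq
    simp only [Set.mem_ofPred_eq, Set.mem_image, Subtype.exists, exists_and_right, exists_prop,
      exists_eq_right, C.ncard_neighborSet_toSimpleGraph, hmem]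
  rw [hends, Set.ncard_image_of_injective _ Subtype.val_injective]
  exact C.connected_toSimpleGraph.ncard_setOf_ncard_neighborSet_lt_two_le fun v =>
    (C.ncard_neighborSet_toSimpleGraph v).trans_le (hdeg v)

end SimpleGraph

section Coloring

variable {V : Type*} {G : SimpleGraph V} {Δ : ℕ} {φ : Sym2 V → Option (Fin (Δ + 1))}

lemma IsProperPartial.subsingleton_setOf_eq_some (hφ : IsProperPartial G Δ φ) (v : V)
    (c : Fin (Δ + 1)) : {w | φ s(v, w) = some c}.Subsingleton := by
  intro w₁ h₁ w₂ h₂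
  by_contra hne
  have hadj : EdgeAdj s(v, w₁) s(v, w₂) :=
    ⟨fun h => hne (Sym2.congr_right.mp h), v, by simp, by simp⟩
  exact hφ.2 _ _ hadj (by rw [h₁]; rfl) (h₁.trans h₂.symm)

lemma IsProperPartial.ncard_neighborSet_abSub_le_two (hφ : IsProperPartial G Δ φ)
    (α β : Fin (Δ + 1)) (v : V) : ((abSub G Δ φ α β).neighborSet v).ncard ≤ 2 := by
  have hα := hφ.subsingleton_setOf_eq_some v α
  have hβ := hφ.subsingleton_setOf_eq_some v β
  calc ((abSub G Δ φ α β).neighborSet v).ncard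
      ≤ ({w | φ s(v, w) = some α} ∪ {w | φ s(v, w) = some β}).ncard :=
        Set.ncard_le_ncard (fun w hw => hw.2) (hα.finite.union hβ.finite)
    _ ≤ 1 + 1 := (Set.ncard_union_le _ _).trans
        (add_le_add ((Set.ncard_le_one hα.finite).2 hα) ((Set.ncard_le_one hβ.finite).2 hβ))

lemma abSub_comm (α β : Fin (Δ + 1)) : abSub G Δ φ α β = abSub G Δ φ β α := by
  ext x y
  simp only [abSub, or_comm]

variable (G Δ φ) in
/-- The ends of the `αβ`-chain through `y` (its component in `G(φ, αβ)`), as a function of the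
unordered pair `s(α, β)`. -/
def chainEnds (y : V) : Sym2 (Fin (Δ + 1)) → Set V :=
  Sym2.lift ⟨fun α β => {z | (abSub G Δ φ α β).Reachable z y ∧
    ((abSub G Δ φ α β).neighborSet z).ncard < 2}, fun α β => by dsimp only; rw [abSub_comm]⟩

lemma IsProperPartial.ncard_chainEnds_le_two [Finite V] (hφ : IsProperPartial G Δ φ) (y : V)
    (s : Sym2 (Fin (Δ + 1))) : (chainEnds G Δ φ y s).ncard ≤ 2 := by
  induction s using Sym2.ind with
  | _ α β =>
    exact ncard_setOf_reachable_ncard_neighborSet_lt_two_le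
      (hφ.ncard_neighborSet_abSub_le_two α β) y

variable (G Δ φ) in
lemma Rin_subset_union_chainEnds (y : V) :
    Rin G Δ φ y ⊆ insert y (G.neighborSet y) ∪
      ⋃ s ∈ {s : Sym2 (Fin (Δ + 1)) | ¬s.IsDiag}, ⋃ z ∈ chainEnds G Δ φ y s, G.neighborSet z := by
  rintro x ⟨α, β, hαβ, hy | hxy | ⟨z, hxz, hz⟩⟩
  · exact Or.inl (Or.inl hy.symm)
  · exact Or.inl (Or.inr hxy.symm)
  · refine Or.inr (Set.mem_biUnion (x := s(α, β)) (Sym2.mk_isDiag_iff.not.mpr hαβ) ?_)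
    exact Set.mem_biUnion (x := z) ⟨hz.2, hz.1⟩ hxz.symm

end Coloring

/-- for every proper partial `(Δ+1)`-edge-coloring `φ` and every vertex `y`,
`|R⁻(y,φ)| ≤ (Δ+1)³`. -/
theorem Rin_card_le [Fintype V] (G : SimpleGraph V) [DecidableRel G.Adj] (Δ : ℕ)
    (hΔ : G.maxDegree ≤ Δ) (φ : Sym2 V → Option (Fin (Δ + 1)))
    (hφ : IsProperPartial G Δ φ) (y : V) :
    (Rin G Δ φ y).ncard ≤ (Δ + 1) ^ 3 := by
  have hdeg (v : V) : (G.neighborSet v).ncard ≤ Δ := by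
    rw [ncard_neighborSet_eq_degree]
    exact (G.degree_le_maxDegree v).trans hΔ
  have hpairs : {s : Sym2 (Fin (Δ + 1)) | ¬s.IsDiag}.ncard * 2 = (Δ + 1) * Δ := by
    rw [← Nat.card_coe_set_eq, Set.coe_ofPred, Nat.card_eq_fintype_card,
      Sym2.card_subtype_not_diag, Fintype.card_fin, ← Nat.add_one_mul_choose_eq,
      Nat.choose_one_right]
  calc (Rin G Δ φ y).ncard
      ≤ (insert y (G.neighborSet y)).ncard + (⋃ s ∈ {s : Sym2 (Fin (Δ + 1)) | ¬s.IsDiag},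
          ⋃ z ∈ chainEnds G Δ φ y s, G.neighborSet z).ncard :=
        (Set.ncard_le_ncard (Rin_subset_union_chainEnds G Δ φ y)).trans (Set.ncard_union_le _ _)
    _ ≤ (Δ + 1) + {s : Sym2 (Fin (Δ + 1)) | ¬s.IsDiag}.ncard * (2 * Δ) := by
      refine add_le_add ((Set.ncard_insert_le _ _).trans (by grw [hdeg y])) ?_
      refine Set.ncard_biUnion_le_ncard_mul (Set.toFinite _) fun s _ => ?_
      grw [Set.ncard_biUnion_le_ncard_mul (Set.toFinite _) fun z _ => hdeg z,
        hφ.ncard_chainEnds_le_two y s]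
    _ = (Δ + 1) * (1 + Δ * Δ) := by grind
    _ ≤ (Δ + 1) ^ 3 := by nlinarith
end
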